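/- arXiv:1903.06187 — 6 statements merged into one kernel-verified Lean document; each statement's English description precedes it below -/
import Mathlib

section
/- One-step ONS inequality: let 𝒲 ⊆ ℝ^{S×d} be convex, M a symmetric positive definite real d×d matrix, X ∈ 𝒲, a ∈ ℝ^S with ‖a‖₂ ≤ 2, b ∈ ℝ^d, and η > 0. Suppose Y ∈ 𝒲 minimizes W ↦ (1/2)‖W − X‖²_M + η·aᵀWb over 𝒲. Then for every W ∈ 𝒲: aᵀ(X − W)b ≤ (‖X − W‖²_M − ‖Y − W‖²_M)/(2η) + 2η·(bᵀM⁻¹b). -/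
/-!
The ONS step is a proximal step for the semi-inner product `⟨A, C⟩_M = ∑ᵢ Aᵢ ⬝ M Cᵢ` on
matrices, and the linear term is `aᵀ W b = ⟨W, V⟩_M` for the outer product `V = a (M⁻¹ b)ᵀ`.
Along the segment from the minimizer `Y` towards `W` the objective is a quadratic in the step
length with nonnegative slope at `0`; hence the objective grows at least by `‖W - Y‖²_M / 2`
from `Y` to `W`. With the expansion of `‖W - X‖²_M` around `Y`, this bounds `⟨X - W, ηV⟩_M` by
`(‖X - W‖²_M - ‖Y - W‖²_M) / 2 + ⟨X - Y, ηV⟩_M - ‖X - Y‖²_M / 2`, and Young's inequality bounds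
the last two terms by `η² ‖V‖²_M / 2 = η² ‖a‖² bᵀM⁻¹b / 2 ≤ 2 η² bᵀM⁻¹b`.
-/

open Matrix

/-- Row-wise weighted squared norm `‖W‖²_M = ∑ i, (W⁽ⁱ⁾)ᵀ M W⁽ⁱ⁾ = trace (W M Wᵀ)`. -/
noncomputable def matQuadNormSq {S d : ℕ} (M : Matrix (Fin d) (Fin d) ℝ)
    (W : Matrix (Fin S) (Fin d) ℝ) : ℝ :=
  ∑ i, (W i) ⬝ᵥ M.mulVec (W i)

open Filter Topology in
lemma nonneg_of_forall_mul_add_sq_mul_nonneg {g c : ℝ}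
    (h : ∀ t ∈ Set.Ioc (0 : ℝ) 1, 0 ≤ t * g + t ^ 2 * c) : 0 ≤ g := by
  have hlim : Tendsto (fun t : ℝ => g + t * c) (𝓝[>] 0) (𝓝 g) := by
    have : Tendsto (fun t : ℝ => g + t * c) (𝓝 0) (𝓝 (g + 0 * c)) :=
      (continuous_const.add (continuous_id.mul continuous_const)).tendsto 0
    simpa using this.mono_left nhdsWithin_le_nhds
  refine ge_of_tendsto hlim ?_
  filter_upwards [Ioc_mem_nhdsGT one_pos] with t ht
  exact nonneg_of_mul_nonneg_right (by linear_combination h t ht) ht.1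

namespace LinearMap.BilinForm

variable {E : Type*} [AddCommGroup E] [Module ℝ E] {B : LinearMap.BilinForm ℝ E}

lemma IsSymm.apply_add_add (hB : B.IsSymm) (x y : E) :
    B (x + y) (x + y) = B x x + 2 * B x y + B y y := by
  simp only [map_add, LinearMap.add_apply, hB.eq y x]
  ring

lemma apply_sub_sub_comm (B : LinearMap.BilinForm ℝ E) (x y : E) :
    B (x - y) (x - y) = B (y - x) (y - x) := by
  rw [← neg_sub y x, neg_left, neg_right, neg_neg]

lemma IsPosSemidef.two_mul_apply_le (hB : B.IsPosSemidef) (x y : E) :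
    2 * B x y ≤ B x x + B y y := by
  have h := hB.isNonneg.nonneg (x - y)
  simp only [map_sub, LinearMap.sub_apply, hB.isSymm.eq y x] at h
  linarith

noncomputable def proxObjective (B : LinearMap.BilinForm ℝ E) (X V W : E) : ℝ :=
  (1 / 2) * B (W - X) (W - X) + B W V

variable {𝒲 : Set E} {X V Y W : E}

lemma IsSymm.proxObjective_add_le_of_isMinOn (hB : B.IsSymm) (hconv : Convex ℝ 𝒲) (hY : Y ∈ 𝒲)
    (hmin : IsMinOn (proxObjective B X V) 𝒲 Y) (hW : W ∈ 𝒲) :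
    proxObjective B X V Y + (1 / 2) * B (W - Y) (W - Y) ≤ proxObjective B X V W := by
  simp only [isMinOn_iff, proxObjective] at hmin ⊢
  have hfirst_order : 0 ≤ B (Y - X) (W - Y) + B (W - Y) V := by
    refine nonneg_of_forall_mul_add_sq_mul_nonneg (c := B (W - Y) (W - Y) / 2) fun t ht => ?_
    have hsegment := hmin _ (hconv.add_smul_sub_mem hY hW ⟨ht.1.le, ht.2⟩)
    rw [show Y + t • (W - Y) - X = (Y - X) + t • (W - Y) by abel, hB.apply_add_add] at hsegment
    simp only [map_add, map_smul, LinearMap.add_apply, LinearMap.smul_apply,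
      smul_eq_mul] at hsegment
    linarith
  have hexpand := hB.apply_add_add (W - Y) (Y - X)
  rw [sub_add_sub_cancel, hB.eq (W - Y) (Y - X)] at hexpand
  linarith [B.sub_left W Y V]

lemma IsPosSemidef.two_mul_apply_sub_le_of_isMinOn (hB : B.IsPosSemidef) (hconv : Convex ℝ 𝒲)
    (hY : Y ∈ 𝒲) (hmin : IsMinOn (proxObjective B X V) 𝒲 Y) (hW : W ∈ 𝒲) :
    2 * B (X - W) V ≤ B (X - W) (X - W) - B (Y - W) (Y - W) + B V V := by
  have hgrowth := hB.isSymm.proxObjective_add_le_of_isMinOn hconv hY hmin hW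
  have hyoung := hB.two_mul_apply_le (X - Y) V
  simp only [proxObjective] at hgrowth
  rw [apply_sub_sub_comm B X W, apply_sub_sub_comm B Y W]
  rw [apply_sub_sub_comm B X Y] at hyoung
  linarith [B.sub_left X W V, B.sub_left X Y V, B.sub_left W Y V]

end LinearMap.BilinForm

namespace Matrix

variable {m n : Type*} [Fintype m] [Fintype n]

def rowBilinForm (M : Matrix n n ℝ) : LinearMap.BilinForm ℝ (Matrix m n ℝ) :=
  LinearMap.mk₂ ℝ (fun A C => ∑ i, A i ⬝ᵥ M *ᵥ C i)
    (fun A A' C => by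
      rw [← Finset.sum_add_distrib]
      exact Finset.sum_congr rfl fun i _ => add_dotProduct (A i) (A' i) _)
    (fun t A C => by
      rw [smul_eq_mul, Finset.mul_sum]
      exact Finset.sum_congr rfl fun i _ => smul_dotProduct t (A i) _)
    (fun A C C' => by
      rw [← Finset.sum_add_distrib]
      exact Finset.sum_congr rfl fun i _ => by rw [← dotProduct_add, ← mulVec_add]; rfl)
    (fun t A C => by
      rw [smul_eq_mul, Finset.mul_sum]
      exact Finset.sum_congr rfl fun i _ => by
        rw [← smul_eq_mul, ← dotProduct_smul, ← mulVec_smul]; rfl)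

lemma rowBilinForm_self {S d : ℕ} (M : Matrix (Fin d) (Fin d) ℝ)
    (W : Matrix (Fin S) (Fin d) ℝ) : rowBilinForm M W W = matQuadNormSq M W := rfl

lemma PosSemidef.isPosSemidef_rowBilinForm {M : Matrix n n ℝ} (hM : M.PosSemidef) :
    (rowBilinForm M : LinearMap.BilinForm ℝ (Matrix m n ℝ)).IsPosSemidef where
  eq A C := by
    refine Finset.sum_congr rfl fun i _ => ?_
    rw [dotProduct_mulVec, ← mulVec_transpose, (isHermitian_iff_isSymm.mp hM.isHermitian).eq,
      dotProduct_comm]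
  nonneg A := Finset.sum_nonneg fun i _ => by simpa using hM.dotProduct_mulVec_nonneg (A i)

lemma rowBilinForm_vecMulVec (M : Matrix n n ℝ) (W : Matrix m n ℝ) (a : m → ℝ) (u : n → ℝ) :
    rowBilinForm M W (vecMulVec a u) = a ⬝ᵥ W *ᵥ (M *ᵥ u) := by
  refine Finset.sum_congr rfl fun i _ => ?_
  rw [show vecMulVec a u i = a i • u from rfl, mulVec_smul, dotProduct_smul, smul_eq_mul]
  rfl

lemma rowBilinForm_vecMulVec_self (M : Matrix n n ℝ) (a : m → ℝ) (u : n → ℝ) :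
    rowBilinForm M (vecMulVec a u) (vecMulVec a u) = (u ⬝ᵥ M *ᵥ u) * (a ⬝ᵥ a) := by
  rw [rowBilinForm_vecMulVec, vecMulVec_mulVec]
  simp

end Matrix

theorem ons_one_step_inequality_general {S d : ℕ}
    (𝒲 : Set (Matrix (Fin S) (Fin d) ℝ)) (hconv : Convex ℝ 𝒲)
    (M : Matrix (Fin d) (Fin d) ℝ) (hM : M.PosDef)
    (X : Matrix (Fin S) (Fin d) ℝ)
    (a : Fin S → ℝ) (ha : Real.sqrt (∑ i, (a i) ^ 2) ≤ 2)
    (b : Fin d → ℝ) (η : ℝ) (hη : 0 < η)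
    (Y : Matrix (Fin S) (Fin d) ℝ) (hY : Y ∈ 𝒲)
    (hmin : ∀ W ∈ 𝒲,
      (1 / 2) * matQuadNormSq M (Y - X) + η * (a ⬝ᵥ Y.mulVec b)
        ≤ (1 / 2) * matQuadNormSq M (W - X) + η * (a ⬝ᵥ W.mulVec b)) :
    ∀ W ∈ 𝒲,
      a ⬝ᵥ (X - W).mulVec b
        ≤ (matQuadNormSq M (X - W) - matQuadNormSq M (Y - W)) / (2 * η)
          + 2 * η * (b ⬝ᵥ M⁻¹.mulVec b) := by
  intro W hW
  set u := M⁻¹ *ᵥ b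
  have hMu : M *ᵥ u = b := by
    rw [mulVec_mulVec, mul_nonsing_inv _ ((isUnit_iff_isUnit_det M).mp hM.isUnit), one_mulVec]
  set V := η • vecMulVec a u
  have hlin (Z : Matrix (Fin S) (Fin d) ℝ) : rowBilinForm M Z V = η * (a ⬝ᵥ Z *ᵥ b) := by
    rw [map_smul, smul_eq_mul, rowBilinForm_vecMulVec, hMu]
  have hVV : rowBilinForm M V V = η ^ 2 * (b ⬝ᵥ M⁻¹ *ᵥ b) * (a ⬝ᵥ a) := by
    rw [LinearMap.BilinForm.smul_left, LinearMap.BilinForm.smul_right,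
      rowBilinForm_vecMulVec_self, hMu, dotProduct_comm u b]
    ring
  have hstep := hM.posSemidef.isPosSemidef_rowBilinForm.two_mul_apply_sub_le_of_isMinOn hconv hY
    (X := X) (V := V) (isMinOn_iff.mpr fun Z hZ => by
      simpa only [LinearMap.BilinForm.proxObjective, rowBilinForm_self, hlin] using hmin Z hZ) hW
  rw [rowBilinForm_self, rowBilinForm_self, hlin, hVV] at hstep
  have hβ : 0 ≤ b ⬝ᵥ M⁻¹ *ᵥ b := hM.inv.posSemidef.dotProduct_mulVec_nonneg b
  have ha4 : a ⬝ᵥ a ≤ 4 := by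
    have := (Real.sqrt_le_left zero_le_two).mp ha
    simpa [dotProduct, ← sq] using this.trans_eq (by norm_num)
  rw [div_add' _ _ _ (by positivity), le_div_iff₀ (by positivity)]
  nlinarith [mul_le_mul_of_nonneg_left ha4 (mul_nonneg (sq_nonneg η) hβ)]

/-- One-step ONS inequality: if `Y` minimizes `W ↦ (1/2)‖W − X‖²_M + η·aᵀWb` over the
convex set `𝒲` and `‖a‖₂ ≤ 2`, then for every `W ∈ 𝒲`,
`aᵀ(X − W)b ≤ (‖X − W‖²_M − ‖Y − W‖²_M)/(2η) + 2η·(bᵀM⁻¹b)`. -/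
theorem ons_one_step_inequality {S d : ℕ}
    (𝒲 : Set (Matrix (Fin S) (Fin d) ℝ)) (hconv : Convex ℝ 𝒲)
    (M : Matrix (Fin d) (Fin d) ℝ) (hM : M.PosDef)
    (X : Matrix (Fin S) (Fin d) ℝ) (hX : X ∈ 𝒲)
    (a : Fin S → ℝ) (ha : Real.sqrt (∑ i, (a i) ^ 2) ≤ 2)
    (b : Fin d → ℝ) (η : ℝ) (hη : 0 < η)
    (Y : Matrix (Fin S) (Fin d) ℝ) (hY : Y ∈ 𝒲)
    (hmin : ∀ W ∈ 𝒲,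
      (1 / 2) * matQuadNormSq M (Y - X) + η * (a ⬝ᵥ Y.mulVec b)
        ≤ (1 / 2) * matQuadNormSq M (W - X) + η * (a ⬝ᵥ W.mulVec b)) :
    ∀ W ∈ 𝒲,
      a ⬝ᵥ (X - W).mulVec b
        ≤ (matQuadNormSq M (X - W) - matQuadNormSq M (Y - W)) / (2 * η)
          + 2 * η * (b ⬝ᵥ M⁻¹.mulVec b) :=
  ons_one_step_inequality_general 𝒲 hconv M hM X a ha b η hη Y hY hmin
end

section
/- Determinant–trace inequality: suppose x₁,…,x_t ∈ ℝ^d satisfy ‖x_s‖₂ ≤ L for all 1 ≤ s ≤ t, let λ ≥ 0, and let V = λI_d + Σ_{s=1}^t x_s x_sᵀ. Then det(V) ≤ (λ + t·L²/d)^d. -/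
/-!
`V` is positive semidefinite, so `det V` is the product of its eigenvalues and `tr V` their
sum, all nonnegative; AM–GM bounds the product by `(tr V / d) ^ d`, and
`tr V = d λ + ∑ ‖x_s‖² ≤ d λ + t L²`.
-/

open Matrix Finset

theorem Real.prod_le_pow_sum_div_card {ι : Type*} (s : Finset ι) {z : ι → ℝ}
    (hz : ∀ i ∈ s, 0 ≤ z i) : ∏ i ∈ s, z i ≤ ((∑ i ∈ s, z i) / #s) ^ #s := by
  rcases s.eq_empty_or_nonempty with rfl | hs
  · simp
  have hcard : (0 : ℝ) < #s := by exact_mod_cast hs.card_pos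
  have amgm := Real.geom_mean_le_arith_mean s (fun _ ↦ 1) z (fun _ _ ↦ zero_le_one)
    (by simpa using hcard) hz
  simp only [Real.rpow_one, sum_const, nsmul_eq_mul, mul_one, one_mul] at amgm
  calc ∏ i ∈ s, z i = ((∏ i ∈ s, z i) ^ (#s : ℝ)⁻¹) ^ #s := by
        rw [← Real.rpow_natCast, ← Real.rpow_mul (prod_nonneg hz),
          inv_mul_cancel₀ hcard.ne', Real.rpow_one]
    _ ≤ ((∑ i ∈ s, z i) / #s) ^ #s :=
        pow_le_pow_left₀ (Real.rpow_nonneg (prod_nonneg hz) _) amgm _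

namespace Matrix

variable {n : Type*} [Fintype n] [DecidableEq n]

theorem PosSemidef.det_le_pow_trace_div_card {A : Matrix n n ℝ} (hA : A.PosSemidef) :
    A.det ≤ (A.trace / Fintype.card n) ^ Fintype.card n := by
  rw [hA.isHermitian.det_eq_prod_eigenvalues, hA.isHermitian.trace_eq_sum_eigenvalues]
  exact Real.prod_le_pow_sum_div_card _ fun i _ ↦ hA.eigenvalues_nonneg i

theorem det_smul_one_add_sum_vecMulVec_le {ι : Type*} (s : Finset ι) {lam L : ℝ}
    (hlam : 0 ≤ lam) (x : ι → n → ℝ) (hx : ∀ i ∈ s, x i ⬝ᵥ x i ≤ L ^ 2) :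
    (lam • (1 : Matrix n n ℝ) + ∑ i ∈ s, vecMulVec (x i) (x i)).det
      ≤ (lam + #s * L ^ 2 / Fintype.card n) ^ Fintype.card n := by
  set V := lam • (1 : Matrix n n ℝ) + ∑ i ∈ s, vecMulVec (x i) (x i)
  have hV : V.PosSemidef := (PosSemidef.one.smul hlam).add <|
    posSemidef_sum s fun i _ ↦ by simpa using posSemidef_vecMulVec_self_star (x i)
  have htrace : V.trace ≤ Fintype.card n * lam + #s * L ^ 2 := by
    have hsum := sum_le_card_nsmul s _ _ hx
    simp only [V, trace_add, trace_smul, trace_one, trace_sum, trace_vecMulVec, smul_eq_mul]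
    rw [nsmul_eq_mul] at hsum
    linarith
  refine hV.det_le_pow_trace_div_card.trans <|
    pow_le_pow_left₀ (by positivity [hV.trace_nonneg]) ?_ _
  rcases isEmpty_or_nonempty n with hn | hn
  · simpa using hlam
  have hcard : (0 : ℝ) < Fintype.card n := by exact_mod_cast Fintype.card_pos
  rw [div_le_iff₀ hcard]
  calc V.trace ≤ Fintype.card n * lam + #s * L ^ 2 := htrace
    _ = (lam + #s * L ^ 2 / Fintype.card n) * Fintype.card n := by field_simp

end Matrix

/-- Determinant–trace inequality: if `‖x_s‖₂ ≤ L` for all `s < t`, `λ ≥ 0`, and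
`V = λI + ∑_{s<t} x_s x_sᵀ`, then `det V ≤ (λ + t·L²/d)^d`. -/
theorem determinant_trace_inequality
    (d t : ℕ) (lam L : ℝ) (hlam : 0 ≤ lam)
    (x : ℕ → Fin d → ℝ) (hx : ∀ s < t, Real.sqrt (∑ j, (x s j) ^ 2) ≤ L) :
    (lam • (1 : Matrix (Fin d) (Fin d) ℝ)
        + ∑ s ∈ Finset.range t, Matrix.vecMulVec (x s) (x s)).det
      ≤ (lam + t * L ^ 2 / d) ^ d := by
  have hnorm : ∀ s ∈ range t, x s ⬝ᵥ x s ≤ L ^ 2 := fun s hs ↦ by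
    simpa [dotProduct, ← sq] using (Real.sqrt_le_iff.mp (hx s (mem_range.mp hs))).2
  simpa using det_smul_one_add_sum_vecMulVec_le (range t) hlam x hnorm
end

section
/- Quadratic-form comparison under a rank-one update: let λ > 0, let P be a symmetric positive semidefinite real d×d matrix, set Z = λI_d + P, and let x ∈ ℝ^d with ‖x‖₂ ≤ R and N ≥ 0 a real number. Then xᵀZ⁻¹x ≤ ((λ + N·R²)/λ)·xᵀ(Z + N·x xᵀ)⁻¹x. -/
/-!
With `y = Z⁻¹ x` and `s = xᵀ Z⁻¹ x`, the updated matrix `W = Z + N x xᵀ` satisfies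
`W y = (1 + N s) x` (Sherman–Morrison), so `xᵀ W⁻¹ x = s / (1 + N s)`. The claim then reduces to
`lam * s ≤ R²`, which holds because `Z ≥ lam • 1` forces `xᵀ Z⁻¹ x ≤ ‖x‖² / lam`.
-/

open Matrix

namespace Matrix

variable {n α : Type*} [Fintype n] [DecidableEq n]

theorem smul_inv_add_vecMulVec_mulVec [CommRing α] {Z : Matrix n n α} (u v : n → α)
    (hZ : IsUnit Z) (hW : IsUnit (Z + vecMulVec u v)) :
    (1 + v ⬝ᵥ Z⁻¹ *ᵥ u) • (Z + vecMulVec u v)⁻¹ *ᵥ u = Z⁻¹ *ᵥ u := by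
  have hZy : Z *ᵥ Z⁻¹ *ᵥ u = u := by
    rw [mulVec_mulVec, mul_nonsing_inv _ ((isUnit_iff_isUnit_det Z).mp hZ), one_mulVec]
  have hWy : (Z + vecMulVec u v) *ᵥ Z⁻¹ *ᵥ u = (1 + v ⬝ᵥ Z⁻¹ *ᵥ u) • u := by
    rw [add_mulVec, hZy, vecMulVec_mulVec, op_smul_eq_smul, add_smul, one_smul]
  rw [← mulVec_smul, ← hWy, mulVec_mulVec,
    nonsing_inv_mul _ ((isUnit_iff_isUnit_det _).mp hW), one_mulVec]

theorem mul_dotProduct_inv_smul_one_add_mulVec_le {lam : ℝ} (hlam : 0 < lam)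
    {P : Matrix n n ℝ} (hP : P.PosSemidef) (x : n → ℝ) :
    lam * (x ⬝ᵥ (lam • 1 + P)⁻¹ *ᵥ x) ≤ x ⬝ᵥ x := by
  set Z := lam • 1 + P
  set y := Z⁻¹ *ᵥ x
  have hZ : Z.PosDef := (PosDef.one.smul hlam).add_posSemidef hP
  have hZy : Z *ᵥ y = x := by
    rw [mulVec_mulVec, mul_nonsing_inv _ ((isUnit_iff_isUnit_det Z).mp hZ.isUnit), one_mulVec]
  -- `Z ≥ lam • 1` bounds the quadratic form `x ⬝ᵥ y = y ⬝ᵥ Z *ᵥ y` from below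
  have hy : lam * (y ⬝ᵥ y) ≤ x ⬝ᵥ y := by
    have := hP.dotProduct_mulVec_nonneg y
    rw [star_trivial] at this
    rw [← hZy, add_mulVec, smul_mulVec, one_mulVec, add_dotProduct, smul_dotProduct,
      smul_eq_mul, dotProduct_comm (P *ᵥ y)]
    linarith
  -- `0 ≤ ‖x - lam • y‖² ≤ x ⬝ᵥ x - lam * (x ⬝ᵥ y)` by `hy`
  have hsq : 0 ≤ (x - lam • y) ⬝ᵥ (x - lam • y) := by
    simpa using dotProduct_star_self_nonneg (x - lam • y)
  simp only [sub_dotProduct, dotProduct_sub, smul_dotProduct, dotProduct_smul, smul_eq_mul,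
    dotProduct_comm y x] at hsq
  nlinarith

end Matrix

/-- Quadratic-form comparison under a rank-one update: for `Z = λI + P` with `P`
symmetric positive semidefinite, `‖x‖₂ ≤ R`, and `N ≥ 0`,
`xᵀZ⁻¹x ≤ ((λ + N·R²)/λ)·xᵀ(Z + N·xxᵀ)⁻¹x`. -/
theorem quadratic_form_rank_one_comparison
    (d : ℕ) (lam R N : ℝ) (hlam : 0 < lam) (hN : 0 ≤ N)
    (P : Matrix (Fin d) (Fin d) ℝ) (hP : P.PosSemidef)
    (Z : Matrix (Fin d) (Fin d) ℝ)
    (hZ : Z = lam • (1 : Matrix (Fin d) (Fin d) ℝ) + P)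
    (x : Fin d → ℝ) (hx : Real.sqrt (∑ j, (x j) ^ 2) ≤ R) :
    x ⬝ᵥ Z⁻¹.mulVec x
      ≤ ((lam + N * R ^ 2) / lam)
          * (x ⬝ᵥ (Z + N • Matrix.vecMulVec x x)⁻¹.mulVec x) := by
  have hZpd : Z.PosDef := hZ ▸ (PosDef.one.smul hlam).add_posSemidef hP
  have hxx : (vecMulVec x x).PosSemidef := by
    simpa using posSemidef_vecMulVec_self_star x
  have hWpd : (Z + N • vecMulVec x x).PosDef := hZpd.add_posSemidef (hxx.smul hN)
  set s := x ⬝ᵥ Z⁻¹ *ᵥ x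
  set q := x ⬝ᵥ (Z + N • vecMulVec x x)⁻¹ *ᵥ x
  have hsherman : (1 + N * s) * q = s := by
    have h := smul_inv_add_vecMulVec_mulVec x (N • x) hZpd.isUnit
      (by simpa using hWpd.isUnit)
    simpa [vecMulVec_smul, dotProduct_smul] using congrArg (x ⬝ᵥ ·) h
  have hq : 0 ≤ q := by simpa using hWpd.inv.posSemidef.dotProduct_mulVec_nonneg x
  have hls : lam * s ≤ x ⬝ᵥ x := by
    simpa only [← hZ] using mul_dotProduct_inv_smul_one_add_mulVec_le hlam hP x
  have hxR : x ⬝ᵥ x ≤ R ^ 2 := by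
    simpa [dotProduct, sq] using (Real.sqrt_le_iff.mp hx).2
  -- `lam * s = lam * q + N * q * (lam * s) ≤ lam * q + N * q * R ^ 2`
  rw [div_mul_eq_mul_div, le_div_iff₀ hlam]
  nlinarith [mul_nonneg (mul_nonneg hN hq) (sub_nonneg.mpr (hls.trans hxR))]
end

section
/- Clipped potential bound with multiplicity: let Z be a symmetric positive definite real d×d matrix, c > 0, x ∈ ℝ^d, and let N, H be integers with 1 ≤ N ≤ H. Then N·min(1, c·xᵀZ⁻¹x) ≤ 2H·log(det(Z + N·c·x xᵀ)/det(Z)). -/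
open Matrix

/-! By the matrix determinant lemma, `det (Z + N c x xᵀ) / det Z = 1 + N u` with
`u = c · xᵀ Z⁻¹ x ≥ 0`, so the claim is the scalar inequality `N · min 1 u ≤ 2 H log (1 + N u)`.
That follows from `min 1 t ≤ 2t / (1 + t) ≤ 2 log (1 + t)` at `t = N u`, since
`min 1 u ≤ min 1 (N u)` and `N ≤ H`. -/

theorem Matrix.det_add_vecMulVec {m α : Type*} [Fintype m] [DecidableEq m] [Field α]
    {A : Matrix m m α} (hA : IsUnit A.det) (u v : m → α) :
    (A + vecMulVec u v).det = A.det * (1 + v ⬝ᵥ A⁻¹ *ᵥ u) := by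
  have hfactor : A + vecMulVec u v = A * (1 + vecMulVec (A⁻¹ *ᵥ u) v) := by
    rw [mul_add, mul_one, mul_vecMulVec, mulVec_mulVec, mul_nonsing_inv A hA, one_mulVec]
  rw [hfactor, det_mul, vecMulVec_eq (ι := Unit), det_one_add_replicateCol_mul_replicateRow]

theorem Real.min_one_le_two_mul_log_one_add {t : ℝ} (ht : 0 ≤ t) :
    min 1 t ≤ 2 * Real.log (1 + t) := by
  have hpos : 0 < 1 + t := by linarith
  have hlog : t / (1 + t) ≤ Real.log (1 + t) := by
    have := Real.one_sub_inv_le_log_of_pos hpos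
    rwa [show 1 - (1 + t)⁻¹ = t / (1 + t) by field_simp; ring] at this
  have hfrac : min 1 t ≤ 2 * (t / (1 + t)) := by
    rw [← mul_div_assoc, le_div_iff₀ hpos]
    rcases le_total t 1 with h | h
    · rw [min_eq_right h]; nlinarith
    · rw [min_eq_left h]; linarith
  linarith

theorem Real.mul_min_one_le_two_mul_log_one_add {u n h : ℝ} (hu : 0 ≤ u) (hn : 1 ≤ n)
    (hnh : n ≤ h) : n * min 1 u ≤ 2 * h * Real.log (1 + n * u) := by
  have hlog : 0 ≤ Real.log (1 + n * u) := Real.log_nonneg (by nlinarith)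
  calc n * min 1 u ≤ n * min 1 (n * u) := by gcongr; nlinarith
    _ ≤ n * (2 * Real.log (1 + n * u)) := by
      gcongr; exact Real.min_one_le_two_mul_log_one_add (by positivity)
    _ ≤ 2 * h * Real.log (1 + n * u) := by nlinarith

/-- Clipped potential bound with multiplicity: for symmetric positive definite `Z`,
`c > 0`, and integers `1 ≤ N ≤ H`,
`N·min(1, c·xᵀZ⁻¹x) ≤ 2H·log (det (Z + N·c·xxᵀ) / det Z)`. -/
theorem clipped_potential_with_multiplicity
    (d : ℕ) (Z : Matrix (Fin d) (Fin d) ℝ) (hZ : Z.PosDef)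
    (c : ℝ) (hc : 0 < c) (x : Fin d → ℝ)
    (N H : ℕ) (hN : 1 ≤ N) (hNH : N ≤ H) :
    (N : ℝ) * min 1 (c * (x ⬝ᵥ Z⁻¹.mulVec x))
      ≤ 2 * (H : ℝ) *
          Real.log ((Z + ((N : ℝ) * c) • Matrix.vecMulVec x x).det / Z.det) := by
  have hdet : 0 < Z.det := hZ.det_pos
  have hquad : 0 ≤ x ⬝ᵥ Z⁻¹ *ᵥ x := hZ.inv.posSemidef.dotProduct_mulVec_nonneg x
  have hratio : (Z + ((N : ℝ) * c) • vecMulVec x x).det / Z.det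
      = 1 + N * (c * (x ⬝ᵥ Z⁻¹ *ᵥ x)) := by
    rw [← smul_vecMulVec, det_add_vecMulVec hdet.ne'.isUnit, mulVec_smul, dotProduct_smul,
      mul_div_cancel_left₀ _ hdet.ne', smul_eq_mul, mul_assoc]
  rw [hratio]
  exact Real.mul_min_one_le_two_mul_log_one_add (by positivity) (mod_cast hN) (mod_cast hNH)
end

section
/- Implicit quadratic inequality (Lemma 2 of Jun et al.): let δ ∈ (0,1), a ≥ 0, f ≥ 0, and q ≥ 1 be real numbers. If q² ≤ a + f·q·√(log(q/δ)), then q² ≤ 2a + f²·log(√(4a + f⁴/(4δ²))/δ). -/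
set_option maxHeartbeats 800000

/-- Tangent-line bound for the logarithm: `log y ≤ α y - log α - 1`. -/
private lemma log_tangent {y α : ℝ} (hy : 0 < y) (hα : 0 < α) :
    Real.log y ≤ α * y - Real.log α - 1 := by
  have h := Real.log_le_sub_one_of_pos (mul_pos hα hy)
  rw [Real.log_mul (ne_of_gt hα) (ne_of_gt hy)] at h
  linarith

private lemma log_le_div_e {y : ℝ} (hy : 0 < y) : Real.log y ≤ y / Real.exp 1 := by
  have h := log_tangent hy (α := (Real.exp 1)⁻¹) (by positivity)
  rw [Real.log_inv, Real.log_exp] at h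
  have h2 : (Real.exp 1)⁻¹ * y = y / Real.exp 1 := by
    rw [inv_mul_eq_div]
  linarith

/-- Implicit quadratic inequality (Lemma 2 of Jun et al.): for `δ ∈ (0,1)`, `a ≥ 0`,
`f ≥ 0`, `q ≥ 1`, if `q² ≤ a + f·q·√(log (q/δ))` then
`q² ≤ 2a + f²·log (√(4a + f⁴/(4δ²)) / δ)`. -/
theorem implicit_quadratic_inequality
    (δ a f q : ℝ) (hδ0 : 0 < δ) (hδ1 : δ < 1) (ha : 0 ≤ a) (hf : 0 ≤ f) (hq : 1 ≤ q)
    (h : q ^ 2 ≤ a + f * q * Real.sqrt (Real.log (q / δ))) :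
    q ^ 2 ≤ 2 * a + f ^ 2 * Real.log (Real.sqrt (4 * a + f ^ 4 / (4 * δ ^ 2)) / δ) := by
  have he : (2:ℝ) < Real.exp 1 := by
    have := Real.exp_one_gt_d9; linarith
  have hq0 : 0 < q := lt_of_lt_of_le one_pos hq
  have hqδ : (1:ℝ) ≤ q / δ := by
    rw [le_div_iff₀ hδ0]; linarith
  have hL0 : 0 ≤ Real.log (q / δ) := Real.log_nonneg hqδ
  set L := Real.log (q / δ) with hLdef
  have hsL : Real.sqrt L ^ 2 = L := Real.sq_sqrt hL0
  -- Step 1: q² ≤ 2a + f² L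
  have S1 : q ^ 2 ≤ 2 * a + f ^ 2 * L := by
    nlinarith [sq_nonneg (q - f * Real.sqrt L), Real.sqrt_nonneg L]
  set B := Real.sqrt (4 * a + f ^ 4 / (4 * δ ^ 2)) with hBdef
  have hBarg : 0 ≤ 4 * a + f ^ 4 / (4 * δ ^ 2) := by positivity
  have hBsq : B ^ 2 = 4 * a + f ^ 4 / (4 * δ ^ 2) := Real.sq_sqrt hBarg
  have hBnn : 0 ≤ B := Real.sqrt_nonneg _
  have hlq0 : 0 ≤ Real.log q := Real.log_nonneg hq
  rcases le_or_gt q B with hqB | hBq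
  · -- easy case: q ≤ B so log(q/δ) ≤ log(B/δ)
    have hlog : L ≤ Real.log (B / δ) := by
      rw [hLdef]
      gcongr
    have : f ^ 2 * L ≤ f ^ 2 * Real.log (B / δ) :=
      mul_le_mul_of_nonneg_left hlog (sq_nonneg f)
    linarith
  · -- hard case: B < q, derive a contradiction
    exfalso
    rcases eq_or_lt_of_le hf with hf0 | hf0
    · -- f = 0
      have hBq2 : B ^ 2 < q ^ 2 := by nlinarith
      rw [← hf0] at S1 hBsq
      norm_num at S1 hBsq
      nlinarith
    · have hfp : 0 < f := hf0
      have hB0 : 0 < B := Real.sqrt_pos.mpr (by positivity)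
      -- f² ≤ 2 B²
      have hBf : f ^ 2 ≤ 2 * B ^ 2 := by
        rcases le_or_gt (2 * δ ^ 2) (f ^ 2) with hcase | hcase
        · rw [hBsq]
          have h1 : f ^ 2 ≤ f ^ 4 / (2 * δ ^ 2) := by
            rw [le_div_iff₀ (by positivity : (0:ℝ) < 2 * δ ^ 2)]
            nlinarith [mul_le_mul_of_nonneg_left hcase (sq_nonneg f)]
          have h2 : f ^ 4 / (2 * δ ^ 2) = 2 * (f ^ 4 / (4 * δ ^ 2)) := by
            field_simp; ring
          linarith
        · -- small f case: show 1/2 ≤ a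
          have hlogq : 2 * Real.log q ≤ q ^ 2 - 1 := by
            have h1 := Real.log_le_sub_one_of_pos (show (0:ℝ) < q ^ 2 by positivity)
            have h2 : Real.log (q ^ 2) = 2 * Real.log q := by
              rw [Real.log_pow]; push_cast; ring
            linarith
          have hlog1δ : 0 ≤ Real.log (1 / δ) := Real.log_nonneg (by
            rw [le_div_iff₀ hδ0]; linarith)
          have hLsplit : L = Real.log q + Real.log (1 / δ) := by
            rw [hLdef, div_eq_mul_one_div q δ, Real.log_mul (ne_of_gt hq0) (by positivity)]
          have e3 : 2 * δ ^ 2 * Real.log (1 / δ) ≤ 1 / Real.exp 1 := by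
            have h1 : Real.log (1 / δ ^ 2) ≤ (1 / δ ^ 2) / Real.exp 1 :=
              log_le_div_e (by positivity)
            have h2 : Real.log (1 / δ ^ 2) = 2 * Real.log (1 / δ) := by
              rw [one_div, one_div, Real.log_inv, Real.log_inv, Real.log_pow]
              push_cast; ring
            rw [h2] at h1
            have h3 : δ ^ 2 * (2 * Real.log (1 / δ)) ≤ δ ^ 2 * ((1 / δ ^ 2) / Real.exp 1) :=
              mul_le_mul_of_nonneg_left h1 (by positivity)
            have h4 : δ ^ 2 * ((1 / δ ^ 2) / Real.exp 1) = 1 / Real.exp 1 := by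
              field_simp
            nlinarith
          have hδsq : δ ^ 2 ≤ 1 := by
            have h9 : δ * δ ≤ 1 * 1 := mul_le_mul hδ1.le hδ1.le hδ0.le zero_le_one
            nlinarith [h9]
          have e2 : 2 * δ ^ 2 * Real.log q ≤ 2 * Real.log q :=
            mul_le_mul_of_nonneg_right (by linarith : 2 * δ ^ 2 ≤ 2) hlq0
          have key : f ^ 2 * L ≤ q ^ 2 - 1 + 1 / Real.exp 1 := by
            have e1 : f ^ 2 * L ≤ 2 * δ ^ 2 * L :=
              mul_le_mul_of_nonneg_right hcase.le hL0
            rw [hLsplit] at e1 ⊢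
            nlinarith [e1, e2, e3, hlogq]
          have ha2 : 1 / 4 ≤ a := by
            have hee : 1 / Real.exp 1 ≤ 1 / 2 := by
              rw [div_le_div_iff₀ (Real.exp_pos 1) (by norm_num)]; linarith
            linarith
          have hdiv : 0 ≤ f ^ 4 / (4 * δ ^ 2) := by positivity
          rw [hBsq]
          linarith [hcase.le]
      -- K: f² log(B/δ) < 2a + f⁴/(4δ²)
      have hK : f ^ 2 * Real.log (B / δ) < 2 * a + f ^ 4 / (4 * δ ^ 2) := by
        have h2log : Real.log ((B / δ) ^ 2) = 2 * Real.log (B / δ) := by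
          rw [Real.log_pow]; push_cast; ring
        have hsq : (B / δ) ^ 2 = B ^ 2 / δ ^ 2 := by ring
        have t1 : Real.log (B ^ 2 / δ ^ 2) ≤
            (δ ^ 2 / f ^ 2) * (B ^ 2 / δ ^ 2) - Real.log (δ ^ 2 / f ^ 2) - 1 :=
          log_tangent (by positivity) (by positivity)
        have hlogdiv : Real.log (δ ^ 2 / f ^ 2) = - Real.log (f ^ 2 / δ ^ 2) := by
          rw [← Real.log_inv]
          congr 1
          field_simp
        have t2 : Real.log (f ^ 2 / δ ^ 2) ≤
            (1/4) * (f ^ 2 / δ ^ 2) - Real.log (1/4 : ℝ) - 1 :=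
          log_tangent (by positivity) (by norm_num)
        have hlog4 : Real.log (4:ℝ) < 2 := by
          rw [show (2:ℝ) = Real.log (Real.exp 1 ^ 2) by rw [Real.log_pow]; simp]
          apply Real.log_lt_log (by norm_num)
          nlinarith
        have hlog14 : Real.log (1/4 : ℝ) = - Real.log 4 := by
          rw [one_div, Real.log_inv]
        have t3 : Real.log (B ^ 2 / δ ^ 2) < B ^ 2 / f ^ 2 + f ^ 2 / (4 * δ ^ 2) := by
          rw [hlogdiv] at t1
          rw [hlog14] at t2
          have harith : (δ ^ 2 / f ^ 2) * (B ^ 2 / δ ^ 2) = B ^ 2 / f ^ 2 := by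
            field_simp
          have harith2 : (1/4 : ℝ) * (f ^ 2 / δ ^ 2) = f ^ 2 / (4 * δ ^ 2) := by
            rw [div_mul_eq_mul_div, one_mul, div_div, mul_comm (δ^2) 4]
          rw [harith] at t1
          rw [harith2] at t2
          linarith
        have hmul : f ^ 2 / 2 * Real.log (B ^ 2 / δ ^ 2) <
            f ^ 2 / 2 * (B ^ 2 / f ^ 2 + f ^ 2 / (4 * δ ^ 2)) :=
          mul_lt_mul_of_pos_left t3 (by positivity)
        have heq1 : f ^ 2 / 2 * Real.log (B ^ 2 / δ ^ 2) = f ^ 2 * Real.log (B / δ) := by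
          rw [← hsq, h2log]; ring
        have heq2 : f ^ 2 / 2 * (B ^ 2 / f ^ 2 + f ^ 2 / (4 * δ ^ 2)) =
            B ^ 2 / 2 + f ^ 4 / (8 * δ ^ 2) := by
          field_simp; ring
        rw [heq1, heq2, hBsq] at hmul
        have h8 : f ^ 4 / (8 * δ ^ 2) + f ^ 4 / (8 * δ ^ 2) = f ^ 4 / (4 * δ ^ 2) := by
          field_simp; ring
        linarith
      -- monotone bound: f² log(q/B) < q² - B²
      have hM : f ^ 2 * Real.log (q / B) < q ^ 2 - B ^ 2 := by
        have t1 : Real.log (q / B) ≤ q / B - 1 :=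
          Real.log_le_sub_one_of_pos (by positivity)
        have t2 : f ^ 2 * Real.log (q / B) ≤ 2 * B ^ 2 * (q / B - 1) := by
          rcases le_or_gt 0 (Real.log (q / B)) with hl | hl
          · calc f ^ 2 * Real.log (q / B) ≤ 2 * B ^ 2 * Real.log (q / B) :=
                  mul_le_mul_of_nonneg_right hBf hl
              _ ≤ 2 * B ^ 2 * (q / B - 1) :=
                  mul_le_mul_of_nonneg_left t1 (by positivity)
          · have hqB1 : 0 ≤ q / B - 1 := by
              rw [sub_nonneg, le_div_iff₀ hB0]; linarith
            nlinarith [sq_nonneg f]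
        have t3 : 2 * B ^ 2 * (q / B - 1) = 2 * B * q - 2 * B ^ 2 := by
          field_simp
        have t4 : 2 * B * q - 2 * B ^ 2 < q ^ 2 - B ^ 2 := by
          nlinarith [sq_nonneg (q - B)]
        linarith [t2.trans_eq t3]
      -- split log(q/δ) = log(B/δ) + log(q/B)
      have hsplit : L = Real.log (B / δ) + Real.log (q / B) := by
        rw [hLdef, show q / δ = (B / δ) * (q / B) by field_simp]
        exact Real.log_mul (by positivity) (by positivity)
      rw [hsplit] at S1
      nlinarith [hK, hM]
end

section
/- Regret-to-estimation conversion under strong convexity: let Φ : ℝ^S → ℝ be differentiable with gradient map g and α-strongly convex, i.e. Φ(v) ≥ Φ(u) + ⟨g(u), v − u⟩ + (α/2)‖v − u‖₂² for all u, v ∈ ℝ^S, with α > 0. For x ∈ ℝ^d and y ∈ ℝ^S define the loss l(W; x, y) = Φ(Wx) − yᵀWx on ℝ^{S×d}. Given x₁,…,x_t ∈ ℝ^d, y₁,…,y_t ∈ ℝ^S, matrices W₁,…,W_t, W* ∈ ℝ^{S×d}, and B ∈ ℝ such that Σ_{i=1}^t [l(W_i; x_i, y_i) − l(W*; x_i,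 y_i)] ≤ B, it holds that Σ_{i=1}^t ‖W*x_i − W_i x_i‖₂² ≤ (2/α)·B + (2/α)·Σ_{i=1}^t (g(W*x_i) − y_i)ᵀ(W*x_i − W_i x_i). -/
open Matrix

noncomputable def glmLoss {S d : ℕ} (Φ : (Fin S → ℝ) → ℝ)
    (W : Matrix (Fin S) (Fin d) ℝ) (x : Fin d → ℝ) (y : Fin S → ℝ) : ℝ :=
  Φ (W.mulVec x) - y ⬝ᵥ W.mulVec x

/-- Strong convexity of `Φ` at `u`, rewritten for the tilted potential `w ↦ Φ w - y ⬝ᵥ w`,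
whose gradient at `u` is `g u - y`. -/
theorem half_mul_sum_sq_sub_le_of_strongConvex {ι : Type*} [Fintype ι] {α : ℝ}
    {Φ : (ι → ℝ) → ℝ} {g : (ι → ℝ) → ι → ℝ}
    (hstrong : ∀ u v : ι → ℝ,
      Φ u + (∑ i, g u i * (v i - u i)) + (α / 2) * ∑ i, (v i - u i) ^ 2 ≤ Φ v)
    (y u v : ι → ℝ) :
    (α / 2) * ∑ i, ((u - v) i) ^ 2
      ≤ (Φ v - y ⬝ᵥ v) - (Φ u - y ⬝ᵥ u) + (g u - y) ⬝ᵥ (u - v) := by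
  have hsq : ∑ i, (v i - u i) ^ 2 = ∑ i, ((u - v) i) ^ 2 :=
    Finset.sum_congr rfl fun i _ => by simp only [Pi.sub_apply]; ring
  have hlin : ∑ i, g u i * (v i - u i) = y ⬝ᵥ v - y ⬝ᵥ u - (g u - y) ⬝ᵥ (u - v) := by
    simp only [dotProduct, Pi.sub_apply, ← Finset.sum_sub_distrib]
    exact Finset.sum_congr rfl fun i _ => by ring
  have := hstrong u v
  rw [hsq, hlin] at this
  linarith

/-- Regret-to-estimation conversion under strong convexity: if `Φ` is `α`-strongly convex
with gradient map `g` and the online iterates `W_i` have regret at most `B` against `W*`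
on the losses `l(·; x_i, y_i)`, then
`∑_i ‖W*x_i − W_i x_i‖₂² ≤ (2/α)B + (2/α)·∑_i (g(W*x_i) − y_i)ᵀ(W*x_i − W_i x_i)`. -/
theorem regret_to_estimation_error
    (S d : ℕ) (α : ℝ) (hα : 0 < α)
    (Φ : (Fin S → ℝ) → ℝ) (g : (Fin S → ℝ) → (Fin S → ℝ))
    (hstrong : ∀ u v : Fin S → ℝ,
      Φ u + (∑ i, g u i * (v i - u i)) + (α / 2) * ∑ i, (v i - u i) ^ 2 ≤ Φ v)
    (t : ℕ) (x : ℕ → Fin d → ℝ) (y : ℕ → Fin S → ℝ)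
    (W : ℕ → Matrix (Fin S) (Fin d) ℝ) (Wstar : Matrix (Fin S) (Fin d) ℝ) (B : ℝ)
    (hreg : ∑ i ∈ Finset.range t,
        (glmLoss Φ (W i) (x i) (y i) - glmLoss Φ Wstar (x i) (y i)) ≤ B) :
    ∑ i ∈ Finset.range t, ∑ j, ((Wstar.mulVec (x i) - (W i).mulVec (x i)) j) ^ 2
      ≤ (2 / α) * B
        + (2 / α) * ∑ i ∈ Finset.range t,
            ((g (Wstar.mulVec (x i)) - y i) ⬝ᵥ (Wstar.mulVec (x i) - (W i).mulVec (x i))) := by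
  set err := ∑ i ∈ Finset.range t, ∑ j, ((Wstar.mulVec (x i) - (W i).mulVec (x i)) j) ^ 2
  set noise := ∑ i ∈ Finset.range t,
    ((g (Wstar.mulVec (x i)) - y i) ⬝ᵥ (Wstar.mulVec (x i) - (W i).mulVec (x i)))
  have hround := fun i ↦
    half_mul_sum_sq_sub_le_of_strongConvex hstrong (y i) (Wstar.mulVec (x i)) ((W i).mulVec (x i))
  have htotal : (α / 2) * err ≤ B + noise :=
    calc (α / 2) * err
        ≤ ∑ i ∈ Finset.range t, (glmLoss Φ (W i) (x i) (y i) - glmLoss Φ Wstar (x i) (y i))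
          + noise := by
          rw [Finset.mul_sum, ← Finset.sum_add_distrib]
          exact Finset.sum_le_sum fun i _ ↦ hround i
      _ ≤ B + noise := by linarith
  calc err = (2 / α) * ((α / 2) * err) := by field_simp
    _ ≤ (2 / α) * (B + noise) := by gcongr
    _ = (2 / α) * B + (2 / α) * noise := mul_add _ _ _
end
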